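/- arXiv:2509.00933 — 4 statements merged into one kernel-verified Lean document; each statement's English description precedes it below -/
import Mathlib

section
/- A cellular automaton cannot have a topological irrational eigenvalue: let F be a cellular automaton on X = A^{ℤ^d}, α ∈ ℝ, and g : X → ℂ a continuous function that is not identically zero such that g(F(x)) = exp(2πiα)·g(x) for all x ∈ X. Then α is rational. -/
/-- A cellular automaton cannot have a topological irrational
eigenvalue. -/
theorem no_topological_irrational_eigenvalue
    {d : ℕ} (hd : 1 ≤ d) {A : Type*} [Fintype A] [Nonempty A]
    [TopologicalSpace A] [DiscreteTopology A]
    (F : ((Fin d → ℤ) → A) → ((Fin d → ℤ) → A))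
    (hFcont : Continuous F)
    (hFshift : ∀ (v : Fin d → ℤ) (x : (Fin d → ℤ) → A),
      F (fun j => x (j + v)) = fun j => F x (j + v))
    (α : ℝ) (g : ((Fin d → ℤ) → A) → ℂ)
    (hgcont : Continuous g)
    (hgne : ∃ x, g x ≠ 0)
    (heig : ∀ x, g (F x) = Complex.exp (2 * Real.pi * Complex.I * α) * g x) :
    ¬ Irrational α := by
  intro hirr
  obtain ⟨x₀, hx₀⟩ := hgne
  -- a cylinder neighborhood of x₀ on which g is nonzero
  have hopen : IsOpen (g ⁻¹' {(0 : ℂ)}ᶜ) := (isOpen_compl_singleton).preimage hgcont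
  rw [isOpen_pi_iff] at hopen
  obtain ⟨I, u, hu, hsub⟩ := hopen x₀ hx₀
  have key : ∀ x : (Fin d → ℤ) → A, (∀ j ∈ I, x j = x₀ j) → g x ≠ 0 := by
    intro x hx
    apply hsub
    intro j hj
    rw [hx j hj]
    exact (hu j hj).2
  -- a bound on the coordinates appearing in I
  obtain ⟨L, hL⟩ : ∃ L : ℕ, ∀ j ∈ I, ∀ i, (j i).natAbs ≤ L := by
    refine ⟨I.sup fun j => Finset.univ.sup fun i => (j i).natAbs, fun j hj i => ?_⟩
    exact le_trans (Finset.le_sup (f := fun i => (j i).natAbs) (Finset.mem_univ i))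
      (Finset.le_sup (f := fun j => Finset.univ.sup fun i => (j i).natAbs) hj)
  -- the period
  obtain ⟨Pz, hPzpos, hPz2L⟩ : ∃ P : ℤ, 0 < P ∧ P = 2 * L + 1 :=
    ⟨2 * L + 1, by positivity, rfl⟩
  -- the periodic reduction map on ℤ
  obtain ⟨r, hr_per, hr_id⟩ : ∃ r : ℤ → ℤ,
      (∀ n, r (n + Pz) = r n) ∧ (∀ n : ℤ, n.natAbs ≤ L → r n = n) := by
    refine ⟨fun n => (n + L) % Pz - L, fun n => ?_, fun n hn => ?_⟩
    · have h : n + Pz + (L : ℤ) = (n + L) + Pz * 1 := by ring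
      simp only [h, Int.add_mul_emod_self_left]
    · have h1 : (0 : ℤ) ≤ n + L := by omega
      have h2 : n + L < Pz := by omega
      simp only [Int.emod_eq_of_lt h1 h2]
      ring
  -- the periodic configuration y, agreeing with x₀ on I
  obtain ⟨y, hgy, hyPer⟩ : ∃ y : (Fin d → ℤ) → A, g y ≠ 0 ∧
      ∀ (i : Fin d) (j : Fin d → ℤ), y (j + Pi.single i Pz) = y j := by
    refine ⟨fun j => x₀ fun i => r (j i), ?_, ?_⟩
    · apply key
      intro j hj
      exact congrArg x₀ (funext fun i => hr_id (j i) (hL j hj i))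
    · intro i j
      apply congrArg x₀
      funext i'
      show r ((j + (Pi.single i Pz : Fin d → ℤ)) i') = r (j i')
      by_cases h : i' = i
      · subst h
        simp only [Pi.add_apply, Pi.single_eq_same]
        exact hr_per (j i')
      · simp only [Pi.add_apply, Pi.single_eq_of_ne h, add_zero]
  clear hr_per hr_id hL key hu hsub hx₀
  -- F preserves periodicity, hence so do its iterates
  have hIterPer : ∀ (n : ℕ) (i : Fin d) (j : Fin d → ℤ),
      F^[n] y (j + Pi.single i Pz) = F^[n] y j := by
    intro n
    induction n with
    | zero => exact hyPer
    | succ n ih =>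
      intro i j
      rw [Function.iterate_succ_apply']
      have h1 : (fun j => F^[n] y (j + Pi.single i Pz)) = F^[n] y := funext (ih i)
      have h2 := hFshift (Pi.single i Pz) (F^[n] y)
      rw [h1] at h2
      exact (congrFun h2 j).symm
  -- periodic configurations are determined by coordinates mod Pz
  have hext : ∀ x : (Fin d → ℤ) → A,
      (∀ (i : Fin d) (j : Fin d → ℤ), x (j + Pi.single i Pz) = x j) →
      ∀ j, x j = x fun i => j i % Pz := by
    intro x hx
    have hS : ∀ c : Fin d → ℤ, (∀ i, Pz ∣ c i) → ∀ j, x (j + c) = x j := by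
      intro c hc
      let S : AddSubgroup (Fin d → ℤ) :=
        { carrier := {c | ∀ j, x (j + c) = x j}
          zero_mem' := by intro j; simp
          add_mem' := by
            intro a b ha hb j
            rw [← add_assoc, hb (j + a)]
            exact ha j
          neg_mem' := by
            intro a ha j
            have h := (ha (j + -a)).symm
            simpa using h }
      have hsingle : ∀ i : Fin d, Pi.single i Pz ∈ S := fun i => hx i
      have hcS : c ∈ S := by
        have hc' : c = ∑ i : Fin d, (c i / Pz) • Pi.single i Pz := by
          funext i'
          rw [Finset.sum_apply]
          rw [Finset.sum_eq_single_of_mem i' (Finset.mem_univ i')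
            (fun b _ hb => by simp [Pi.single_apply, Ne.symm hb])]
          simp only [Pi.smul_apply, Pi.single_eq_same, smul_eq_mul]
          exact (Int.ediv_mul_cancel (hc i')).symm
        rw [hc']
        exact AddSubgroup.sum_mem _ fun i _ => AddSubgroup.zsmul_mem _ (hsingle i) _
      exact hcS
    intro j
    have hdvd : ∀ i, Pz ∣ (j i % Pz - j i) := by
      intro i
      refine ⟨-(j i / Pz), ?_⟩
      rw [Int.emod_def]
      ring
    have h := hS (fun i => j i % Pz - j i) hdvd j
    have hjc : (j + fun i => j i % Pz - j i) = fun i => j i % Pz := by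
      funext i
      show j i + (j i % Pz - j i) = j i % Pz
      ring
    rw [hjc] at h
    exact h.symm
  -- pigeonhole: the orbit of y is eventually periodic
  obtain ⟨Pn, hPnz⟩ : ∃ Pn : ℕ, Pz = (Pn : ℤ) :=
    ⟨Pz.toNat, by omega⟩
  obtain ⟨n, m, hnm, hφ⟩ := Finite.exists_ne_map_eq_of_infinite
    (fun (n : ℕ) => fun (t : Fin d → Fin Pn) => F^[n] y fun i => ((t i : ℕ) : ℤ))
  have hφ' : ∀ t : Fin d → Fin Pn,
      F^[n] y (fun i => ((t i : ℕ) : ℤ)) = F^[m] y (fun i => ((t i : ℕ) : ℤ)) :=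
    fun t => congrFun hφ t
  clear hφ
  have hFeq : F^[n] y = F^[m] y := by
    funext j
    have hmodlt : ∀ i, 0 ≤ j i % Pz ∧ j i % Pz < Pz := fun i =>
      ⟨Int.emod_nonneg _ (by omega), Int.emod_lt_of_pos _ hPzpos⟩
    have hPnpos : 0 < Pn := by have := hmodlt; omega
    let t : Fin d → Fin Pn := fun i =>
      ⟨(j i % Pz).toNat, by have := hmodlt i; omega⟩
    have ht : (fun i => ((t i : ℕ) : ℤ)) = fun i => j i % Pz := by
      funext i
      show (((j i % Pz).toNat : ℕ) : ℤ) = j i % Pz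
      have := hmodlt i
      omega
    calc F^[n] y j = F^[n] y (fun i => j i % Pz) := hext _ (hIterPer n) j
      _ = F^[n] y (fun i => ((t i : ℕ) : ℤ)) := by rw [ht]
      _ = F^[m] y (fun i => ((t i : ℕ) : ℤ)) := hφ' t
      _ = F^[m] y (fun i => j i % Pz) := by rw [ht]
      _ = F^[m] y j := (hext _ (hIterPer m) j).symm
  -- eigenvalue relation along the orbit
  set lam : ℂ := Complex.exp (2 * Real.pi * Complex.I * α) with hlamdef
  have hlamne : lam ≠ 0 := Complex.exp_ne_zero _
  have hiter : ∀ k : ℕ, g (F^[k] y) = lam ^ k * g y := by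
    intro k
    induction k with
    | zero => simp
    | succ k ih =>
      rw [Function.iterate_succ_apply', heig, ih]
      ring
  have step : ∀ a b : ℕ, a < b → F^[a] y = F^[b] y → ∃ k : ℕ, 1 ≤ k ∧ lam ^ k = 1 := by
    intro a b hab hFab
    refine ⟨b - a, by omega, ?_⟩
    have h1 : lam ^ a * g y = lam ^ b * g y := by rw [← hiter, ← hiter, hFab]
    have h2 : lam ^ b = lam ^ a * lam ^ (b - a) := by
      rw [← pow_add]
      congr 1
      omega
    rw [h2] at h1
    have h3 : lam ^ a = lam ^ a * lam ^ (b - a) := mul_right_cancel₀ hgy h1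
    have h4 : lam ^ a * 1 = lam ^ a * lam ^ (b - a) := by rw [mul_one]; exact h3
    exact (mul_left_cancel₀ (pow_ne_zero a hlamne) h4).symm
  have hkey : ∃ k : ℕ, 1 ≤ k ∧ lam ^ k = 1 := by
    rcases hnm.lt_or_gt with h | h
    · exact step n m h hFeq
    · exact step m n h hFeq.symm
  obtain ⟨k, hk1, hk⟩ := hkey
  -- conclude α is rational
  have hexp : Complex.exp ((k : ℂ) * (2 * Real.pi * Complex.I * α)) = 1 := by
    rw [Complex.exp_nat_mul, ← hlamdef]
    exact hk
  rw [Complex.exp_eq_one_iff] at hexp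
  obtain ⟨q, hq⟩ := hexp
  have hne : (2 * (Real.pi : ℂ) * Complex.I) ≠ 0 := by
    simp [Complex.I_ne_zero, Real.pi_ne_zero]
  have h2 : ((k : ℂ) * α) * (2 * Real.pi * Complex.I) = (q : ℂ) * (2 * Real.pi * Complex.I) := by
    rw [← hq]; ring
  have h3 : (k : ℂ) * α = (q : ℂ) := mul_right_cancel₀ hne h2
  have h4 : (k : ℝ) * α = (q : ℝ) := by exact_mod_cast h3
  have hk0 : (k : ℝ) ≠ 0 := by positivity
  apply hirr
  refine ⟨(q : ℚ) / (k : ℚ), ?_⟩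
  push_cast
  field_simp
  linarith [h4]
end

section
/- Let F be a surjective cellular automaton on X = A^{ℤ^d} that is equicontinuous (every point of X is an equicontinuity point of F), and let μ be the uniform Bernoulli measure. Then every measurable eigenvalue of F is rational: if α ∈ ℝ and g : X → ℂ is a measurable function with μ({x : g(x) ≠ 0}) > 0 such that g(F(x)) = exp(2πiα)·g(x) for μ-almost every x, then α is rational. -/
open MeasureTheory

set_option linter.unusedSectionVars false

section Aux

variable {d : ℕ} {A : Type*} [Fintype A] [Nonempty A]

/-- The `sup`-ball of radius `r` in `ℤ^d`, as a finset. -/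
noncomputable def ballF (d r : ℕ) : Finset (Fin d → ℤ) :=
  Fintype.piFinset (fun _ => Finset.Icc (-(r:ℤ)) r)

lemma mem_ballF {r : ℕ} {j : Fin d → ℤ} : j ∈ ballF d r ↔ ∀ s, (j s).natAbs ≤ r := by
  simp only [ballF, Fintype.mem_piFinset, Finset.mem_Icc]
  constructor <;> intro h s <;> have := h s <;> omega

lemma uniformEqui [TopologicalSpace A] [DiscreteTopology A]
    (F : ((Fin d → ℤ) → A) → ((Fin d → ℤ) → A))
    (hFequi : ∀ x : (Fin d → ℤ) → A, ∀ n : ℕ, ∃ m : ℕ,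
      ∀ y : (Fin d → ℤ) → A,
        (∀ j : Fin d → ℤ, (∀ s, (j s).natAbs ≤ m) → y j = x j) →
        ∀ (i : ℕ) (j : Fin d → ℤ), (∀ s, (j s).natAbs ≤ n) →
          F^[i] y j = F^[i] x j) :
    ∃ M : ℕ, ∀ y z : (Fin d → ℤ) → A,
      (∀ j, (∀ s, (j s).natAbs ≤ M) → y j = z j) → ∀ i, F^[i] y 0 = F^[i] z 0 := by
  classical
  set m : ((Fin d → ℤ) → A) → ℕ := fun x => (hFequi x 0).choose with hm
  have hmspec : ∀ x, ∀ y : (Fin d → ℤ) → A,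
      (∀ j : Fin d → ℤ, (∀ s, (j s).natAbs ≤ m x) → y j = x j) →
      ∀ (i : ℕ) (j : Fin d → ℤ), (∀ s, (j s).natAbs ≤ 0) → F^[i] y j = F^[i] x j :=
    fun x => (hFequi x 0).choose_spec
  -- open cover
  have hopen : ∀ x : (Fin d → ℤ) → A,
      IsOpen {y : (Fin d → ℤ) → A | ∀ j ∈ ballF d (m x), y j = x j} := by
    intro x
    have : {y : (Fin d → ℤ) → A | ∀ j ∈ ballF d (m x), y j = x j}
        = ⋂ j ∈ ballF d (m x), {y : (Fin d → ℤ) → A | y j = x j} := by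
      ext y; simp
    rw [this]
    refine isOpen_biInter_finset fun j _ => ?_
    show IsOpen ((fun y : (Fin d → ℤ) → A => y j) ⁻¹' {x j})
    exact (continuous_apply j).isOpen_preimage _ (isOpen_discrete _)
  obtain ⟨t, ht⟩ := IsCompact.elim_finite_subcover (isCompact_univ
      (X := (Fin d → ℤ) → A))
      (fun x => {y : (Fin d → ℤ) → A | ∀ j ∈ ballF d (m x), y j = x j}) hopen
      (fun z _ => Set.mem_iUnion.2 ⟨z, fun j _ => rfl⟩)
  refine ⟨t.sup m, fun y z hyz i => ?_⟩
  obtain ⟨x, hx, hzx⟩ : ∃ x ∈ t, ∀ j ∈ ballF d (m x), z j = x j := by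
    have := ht (Set.mem_univ z)
    simpa using this
  have hmx : m x ≤ t.sup m := Finset.le_sup hx
  have hzx' : ∀ j : Fin d → ℤ, (∀ s, (j s).natAbs ≤ m x) → z j = x j :=
    fun j hj => hzx j (mem_ballF.2 hj)
  have hyx' : ∀ j : Fin d → ℤ, (∀ s, (j s).natAbs ≤ m x) → y j = x j :=
    fun j hj => (hyz j (fun s => le_trans (hj s) hmx)).trans (hzx' j hj)
  have h0 : ∀ s : Fin d, ((0 : Fin d → ℤ) s).natAbs ≤ 0 := fun s => by simp
  rw [hmspec x y hyx' i 0 h0, hmspec x z hzx' i 0 h0]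

section shifts
variable (F : ((Fin d → ℤ) → A) → ((Fin d → ℤ) → A))
  (hFshift : ∀ (v : Fin d → ℤ) (x : (Fin d → ℤ) → A),
    F (fun j => x (j + v)) = fun j => F x (j + v))

include hFshift

lemma iterate_shift (i : ℕ) (v : Fin d → ℤ) (x : (Fin d → ℤ) → A) :
    F^[i] (fun j => x (j + v)) = fun j => F^[i] x (j + v) := by
  induction i generalizing x with
  | zero => simp
  | succ n ih =>
    rw [Function.iterate_succ_apply, Function.iterate_succ_apply, hFshift, ih]

lemma eval_shift (i : ℕ) (v : Fin d → ℤ) (x : (Fin d → ℤ) → A) :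
    F^[i] x v = F^[i] (fun k => x (k + v)) 0 := by
  rw [iterate_shift F hFshift]; simp

variable {M : ℕ}
  (hM : ∀ y z : (Fin d → ℤ) → A,
      (∀ j, (∀ s, (j s).natAbs ≤ M) → y j = z j) → ∀ i, F^[i] y 0 = F^[i] z 0)

include hM

/-- locality of all iterates at any position -/
lemma locIter (i : ℕ) (x y : (Fin d → ℤ) → A) (j : Fin d → ℤ)
    (h : ∀ k : Fin d → ℤ, (∀ s, (k s).natAbs ≤ M) → x (k + j) = y (k + j)) :
    F^[i] x j = F^[i] y j := by
  rw [eval_shift F hFshift i j x, eval_shift F hFshift i j y]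
  exact hM _ _ (fun k hk => h k hk) i

/-- extension of a pattern on the ball to a full configuration -/
noncomputable def extB (M : ℕ) (w : (↥(ballF d M)) → A) : (Fin d → ℤ) → A :=
  fun j => if h : j ∈ ballF d M then w ⟨j, h⟩ else Classical.arbitrary A

lemma exists_period (hFsurj : Function.Surjective F) :
    ∃ p : ℕ, 1 ≤ p ∧ F^[p] = id := by
  classical
  set b : ℕ → ((↥(ballF d M)) → A) → A := fun i w => F^[i] (extB M w) 0 with hb
  obtain ⟨i, i', hne, heq⟩ := Finite.exists_ne_map_eq_of_infinite b
  have key : ∀ k k', b k = b k' → F^[k] = F^[k'] := by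
    intro k k' hkk'
    funext x j
    rw [eval_shift F hFshift k j x, eval_shift F hFshift k' j x]
    set w : (↥(ballF d M)) → A := fun c => x ((c : Fin d → ℤ) + j) with hw
    have hagree : ∀ c : Fin d → ℤ, (∀ s, (c s).natAbs ≤ M) →
        (fun k => x (k + j)) c = extB M w c := by
      intro c hc
      have hmem : c ∈ ballF d M := mem_ballF.2 hc
      simp only [extB, dif_pos hmem, hw]
    have h1 : F^[k] (fun k => x (k + j)) 0 = F^[k] (extB M w) 0 := hM _ _ hagree k
    have h2 : F^[k'] (fun k => x (k + j)) 0 = F^[k'] (extB M w) 0 := hM _ _ hagree k'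
    rw [h1, h2]
    show b k w = b k' w
    rw [hkk']
  rcases hne.lt_or_gt with hlt | hlt
  · refine ⟨i' - i, by omega, ?_⟩
    funext x
    obtain ⟨y, hy⟩ := (hFsurj.iterate i) x
    have : F^[i' - i] (F^[i] y) = F^[(i' - i) + i] y := (Function.iterate_add_apply F _ i y).symm
    rw [id_eq, ← hy, this]
    have hii : (i' - i) + i = i' := by omega
    rw [hii, ← key i i' heq]
  · refine ⟨i - i', by omega, ?_⟩
    funext x
    obtain ⟨y, hy⟩ := (hFsurj.iterate i') x
    have : F^[i - i'] (F^[i'] y) = F^[(i - i') + i'] y := (Function.iterate_add_apply F _ i' y).symm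
    rw [id_eq, ← hy, this]
    have hii : (i - i') + i' = i := by omega
    rw [hii, key i i' heq]
end shifts

/-- Number of functions `Z → A` with prescribed values on an injectively embedded `S`. -/
lemma card_fixed_on_range {Z S A : Type*} [Fintype Z] [Fintype S] [Fintype A]
    (ι : S → Z) (hι : Function.Injective ι) (w : S → A) :
    Nat.card {z : Z → A // ∀ a, z (ι a) = w a}
      = Fintype.card A ^ (Fintype.card Z - Fintype.card S) := by
  classical
  have e : {z : Z → A // ∀ a, z (ι a) = w a} ≃ ({t : Z // t ∉ Set.range ι} → A) :=
    { toFun := fun z t => z.1 t.1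
      invFun := fun f => ⟨fun t => if h : t ∈ Set.range ι then w h.choose else f ⟨t, h⟩, by
        intro a
        have h : ι a ∈ Set.range ι := ⟨a, rfl⟩
        simp only [dif_pos h]
        have := h.choose_spec
        rw [hι this]⟩
      left_inv := by
        rintro ⟨z, hz⟩
        ext t
        by_cases h : t ∈ Set.range ι
        · simp only [dif_pos h]
          exact (hz h.choose).symm.trans (congrArg z h.choose_spec)
        · simp only [dif_neg h]
      right_inv := by
        intro f
        ext t
        simp only [dif_neg t.2] }
  rw [Nat.card_congr e]
  rw [Nat.card_fun]
  have h1 : Nat.card {t : Z // t ∉ Set.range ι} = Fintype.card Z - Fintype.card S := by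
    rw [Nat.card_eq_fintype_card, Fintype.card_subtype_compl]
    congr 1
    rw [Fintype.card_of_subtype (Set.toFinset (Set.range ι)) (by simp)]
    rw [← Set.ncard_coe_finset]
    simp only [Set.coe_toFinset]
    rw [Set.ncard_eq_toFinset_card', Set.toFinset_range, Finset.card_image_of_injective _ hι,
      Finset.card_univ]
  rw [h1, Nat.card_eq_fintype_card]

lemma balance {d : ℕ} {A : Type*} [Fintype A] [Nonempty A]
    [MeasurableSpace A] [MeasurableSingletonClass A]
    (F : ((Fin d → ℤ) → A) → ((Fin d → ℤ) → A))
    (hFshift : ∀ (v : Fin d → ℤ) (x : (Fin d → ℤ) → A),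
      F (fun j => x (j + v)) = fun j => F x (j + v))
    (hFinj : Function.Injective F)
    {M : ℕ}
    (hloc : ∀ (x y : (Fin d → ℤ) → A) (j : Fin d → ℤ),
      (∀ k : Fin d → ℤ, (∀ s, (k s).natAbs ≤ M) → x (k + j) = y (k + j)) → F x j = F y j)
    (μ : Measure ((Fin d → ℤ) → A))
    (hμ : ∀ (s : Finset (Fin d → ℤ)) (u : (Fin d → ℤ) → A),
      μ {x | ∀ j ∈ s, x j = u j} = (Fintype.card A : ENNReal)⁻¹ ^ s.card)
    (s : Finset (Fin d → ℤ)) (u : (Fin d → ℤ) → A) :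
    μ {x | ∀ j ∈ s, F x j = u j} = (Fintype.card A : ENNReal)⁻¹ ^ s.card := by
  classical
  set q : ℕ := Fintype.card A with hq
  -- the window W = s + ball M
  set W : Finset (Fin d → ℤ) := s.biUnion (fun j => (ballF d M).image (· + j)) with hW
  have hWmem : ∀ j ∈ s, ∀ k : Fin d → ℤ, (∀ t, (k t).natAbs ≤ M) → k + j ∈ W := by
    intro j hj k hk
    exact Finset.mem_biUnion.2 ⟨j, hj, Finset.mem_image.2 ⟨k, mem_ballF.2 hk, rfl⟩⟩
  have hsW : s ⊆ W := by
    intro j hj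
    have := hWmem j hj 0 (fun t => by simp)
    simpa using this
  -- locality relative to W
  have hlocW : ∀ x y : (Fin d → ℤ) → A, (∀ c ∈ W, x c = y c) →
      ∀ j ∈ s, F x j = F y j := by
    intro x y h j hj
    exact hloc x y j (fun k hk => h _ (hWmem j hj k hk))
  -- extension and restriction
  set extW : ((↥W) → A) → ((Fin d → ℤ) → A) :=
    fun w j => if h : j ∈ W then w ⟨j, h⟩ else Classical.arbitrary A with hextW
  set resW : ((Fin d → ℤ) → A) → ((↥W) → A) := fun x c => x ↑c with hresW
  have hextres : ∀ x : (Fin d → ℤ) → A, ∀ c ∈ W, extW (resW x) c = x c := by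
    intro x c hc; simp only [hextW, hresW, dif_pos hc]
  -- the finite set of admissible patterns on W
  set P : Finset ((↥W) → A) :=
    Finset.univ.filter (fun w => ∀ j ∈ s, F (extW w) j = u j) with hP
  -- decomposition of the preimage set
  have hdecomp : {x | ∀ j ∈ s, F x j = u j}
      = ⋃ w ∈ P, {x : (Fin d → ℤ) → A | ∀ j ∈ W, x j = extW w j} := by
    ext x
    simp only [Set.mem_setOf_eq, Set.mem_iUnion]
    constructor
    · intro hx
      refine ⟨resW x, ?_, ?_⟩
      · rw [hP, Finset.mem_filter]
        refine ⟨Finset.mem_univ _, fun j hj => ?_⟩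
        rw [hlocW (extW (resW x)) x (hextres x) j hj]
        exact hx j hj
      · intro j hj
        exact (hextres x j hj).symm
    · rintro ⟨w, hwP, hxw⟩
      intro j hj
      have h1 : F x j = F (extW w) j :=
        hlocW x (extW w) (fun c hc => hxw c hc) j hj
      rw [h1]
      exact (Finset.mem_filter.1 hwP).2 j hj
  -- measure of the preimage
  have hmeasP : μ {x | ∀ j ∈ s, F x j = u j}
      = (P.card : ENNReal) * ((q : ENNReal)⁻¹) ^ W.card := by
    rw [hdecomp]
    have hdisj : (P : Set ((↥W) → A)).PairwiseDisjoint
        (fun w => {x : (Fin d → ℤ) → A | ∀ j ∈ W, x j = extW w j}) := by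
      intro w _ w' _ hne
      refine Set.disjoint_left.2 fun x hx hx' => hne ?_
      funext c
      have h1 := hx (c : Fin d → ℤ) c.2
      have h2 := hx' (c : Fin d → ℤ) c.2
      simp only [hextW, dif_pos c.2] at h1 h2
      rw [Subtype.coe_eta] at h1 h2
      rw [← h1, ← h2]
    have hmeas : ∀ w ∈ P, MeasurableSet {x : (Fin d → ℤ) → A | ∀ j ∈ W, x j = extW w j} := by
      intro w _
      have : {x : (Fin d → ℤ) → A | ∀ j ∈ W, x j = extW w j}
          = ⋂ j ∈ W, (fun x : (Fin d → ℤ) → A => x j) ⁻¹' {extW w j} := by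
        ext x; simp
      rw [this]
      exact MeasurableSet.biInter W.countable_toSet
        (fun j _ => measurable_pi_apply j (measurableSet_singleton _))
    rw [measure_biUnion_finset hdisj hmeas]
    have : ∀ w ∈ P, μ {x : (Fin d → ℤ) → A | ∀ j ∈ W, x j = extW w j}
        = ((q : ENNReal)⁻¹) ^ W.card := fun w _ => hμ W (extW w)
    rw [Finset.sum_congr rfl this, Finset.sum_const, nsmul_eq_mul]
  -- torus counting gives the cardinality of P
  have hcount : ∃ nT : ℕ, s.card ≤ nT ∧ W.card ≤ nT ∧
      P.card * q ^ (nT - W.card) = q ^ (nT - s.card) := by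
    -- bound on coordinates of W
    obtain ⟨R, hRdef⟩ : ∃ R : ℕ,
        R = W.sup (fun j => Finset.univ.sup (fun t => (j t).natAbs)) := ⟨_, rfl⟩
    have hRW : ∀ j ∈ W, ∀ t, (j t).natAbs ≤ R := by
      intro j hj t
      have h1 : (j t).natAbs ≤ Finset.univ.sup (fun t => (j t).natAbs) :=
        Finset.le_sup (f := fun t => (j t).natAbs) (Finset.mem_univ t)
      have h2 : Finset.univ.sup (fun t => (j t).natAbs) ≤ R := by
        rw [hRdef]
        exact Finset.le_sup (f := fun j : Fin d → ℤ => Finset.univ.sup (fun t => (j t).natAbs)) hj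
      exact le_trans h1 h2
    obtain ⟨L, hL⟩ : ∃ L : ℕ, L = 2 * R + 1 := ⟨_, rfl⟩
    haveI : NeZero L := ⟨hL ▸ Nat.succ_ne_zero _⟩
    set π : (Fin d → ℤ) → (Fin d → ZMod L) := fun j t => ((j t : ℤ) : ZMod L) with hπ
    -- π is injective on W
    have hπW : ∀ j ∈ W, ∀ j' ∈ W, π j = π j' → j = j' := by
      intro j hj j' hj' hjj'
      funext t
      have h0 : ((j t - j' t : ℤ) : ZMod L) = 0 := by
        push_cast
        rw [sub_eq_zero]
        exact congrFun hjj' t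
      have hdvd : (L : ℤ) ∣ (j t - j' t) := (ZMod.intCast_zmod_eq_zero_iff_dvd _ L).1 h0
      by_contra hne
      have hne' : j t - j' t ≠ 0 := sub_ne_zero.2 hne
      have h1 : (L : ℤ) ≤ |j t - j' t| :=
        Int.le_of_dvd (abs_pos.2 hne') ((dvd_abs _ _).2 hdvd)
      have h2 := hRW j hj t
      have h3 := hRW j' hj' t
      rw [Int.abs_eq_natAbs] at h1
      have h4 : (j t - j' t).natAbs ≤ (j t).natAbs + (j' t).natAbs := Int.natAbs_sub_le _ _
      have h5 : L ≤ (j t - j' t).natAbs := by exact_mod_cast h1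
      have h6 : L ≤ 2 * R := le_trans h5 (le_trans h4
        (le_trans (add_le_add h2 h3) (le_of_eq (two_mul R).symm)))
      exact absurd (hL ▸ h6) (by simp)
    -- lifting from the torus
    set lift : (Fin d → ZMod L) → (Fin d → ℤ) := fun t i => ((t i).val : ℤ) with hlift
    have hπlift : ∀ t, π (lift t) = t := by
      intro t; funext i
      show ((((t i).val : ℕ) : ℤ) : ZMod L) = t i
      rw [Int.cast_natCast, ZMod.natCast_val, ZMod.cast_id]
    -- configurations pulled back from the torus are periodic
    have hper : ∀ (z : (Fin d → ZMod L) → A) (j j' : Fin d → ℤ), π j = π j' →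
        F (fun k => z (π k)) j = F (fun k => z (π k)) j' := by
      intro z j j' hjj'
      have hshiftinv : (fun k => z (π (k + (j - j')))) = (fun k => z (π k)) := by
        funext k
        congr 1
        funext i
        have hc : ((j i : ℤ) : ZMod L) = ((j' i : ℤ) : ZMod L) := congrFun hjj' i
        simp only [hπ, Pi.add_apply, Pi.sub_apply]
        push_cast
        rw [hc]
        ring
      have h2 := hFshift (j - j') (fun k => z (π k))
      rw [hshiftinv] at h2
      have h3 := congrFun h2 j'
      have h4 : j' + (j - j') = j := by abel
      rw [h4] at h3
      exact h3.symm
    -- the induced map on torus configurations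
    set G : ((Fin d → ZMod L) → A) → ((Fin d → ZMod L) → A) :=
      fun z t => F (fun k => z (π k)) (lift t) with hG
    have hcompat : ∀ (z : (Fin d → ZMod L) → A) (j : Fin d → ℤ),
        F (fun k => z (π k)) j = G z (π j) := by
      intro z j
      exact hper z j (lift (π j)) (by rw [hπlift])
    have hGinj : Function.Injective G := by
      intro z z' hzz'
      have h1 : F (fun k => z (π k)) = F (fun k => z' (π k)) := by
        funext j
        rw [hcompat z j, hcompat z' j, hzz']
      have h2 := hFinj h1
      funext t
      have := congrFun h2 (lift t)
      rw [hπlift] at this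
      exact this
    have hGbij : Function.Bijective G := Finite.injective_iff_bijective.1 hGinj
    have hιW : Function.Injective (fun c : (↥W) => π (c : Fin d → ℤ)) := by
      intro c c' h
      exact Subtype.ext (hπW _ c.2 _ c'.2 h)
    have hιs : Function.Injective (fun c : (↥s) => π (c : Fin d → ℤ)) := by
      intro c c' h
      exact Subtype.ext (hπW _ (hsW c.2) _ (hsW c'.2) h)
    -- restriction of a torus configuration to the window W
    set resT : ((Fin d → ZMod L) → A) → ((↥W) → A) := fun z c => z (π ↑c) with hresT
    have hcondiff : ∀ z : (Fin d → ZMod L) → A,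
        resT z ∈ P ↔ (∀ c : (↥s), G z (π (c : Fin d → ℤ)) = u ↑c) := by
      intro z
      have hzext : ∀ j ∈ s, G z (π j) = F (extW (resT z)) j := by
        intro j hj
        rw [← hcompat z j]
        exact hlocW (fun k => z (π k)) (extW (resT z))
          (fun c hc => by simp only [hextW, hresT, dif_pos hc]) j hj
      rw [hP, Finset.mem_filter]
      constructor
      · rintro ⟨-, h⟩ c
        rw [hzext (c : Fin d → ℤ) c.2]
        exact h _ c.2
      · intro h
        refine ⟨Finset.mem_univ _, fun j hj => ?_⟩
        rw [← hzext j hj]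
        exact h ⟨j, hj⟩
    have fib : ∀ w ∈ P, Nat.card {z : (Fin d → ZMod L) → A // resT z = w}
        = q ^ (Fintype.card (Fin d → ZMod L) - W.card) := by
      intro w _
      have e : {z : (Fin d → ZMod L) → A // resT z = w}
          ≃ {z : (Fin d → ZMod L) → A // ∀ c : (↥W), z ((fun c : (↥W) => π ↑c) c) = w c} :=
        Equiv.subtypeEquiv (Equiv.refl _) (fun z => by
          simp only [Equiv.refl_apply, hresT, funext_iff])
      rw [Nat.card_congr e, card_fixed_on_range _ hιW, Fintype.card_coe, hq]
    have n2 : Nat.card {z : (Fin d → ZMod L) → A // resT z ∈ P}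
        = q ^ (Fintype.card (Fin d → ZMod L) - s.card) := by
      have e1 : {z : (Fin d → ZMod L) → A // resT z ∈ P}
          ≃ {z : (Fin d → ZMod L) → A // ∀ c : (↥s), G z ((fun c : (↥s) => π ↑c) c) = u ↑c} :=
        Equiv.subtypeEquiv (Equiv.refl _) (fun z => by
          simpa using hcondiff z)
      have e2 : {z : (Fin d → ZMod L) → A // ∀ c : (↥s), G z ((fun c : (↥s) => π ↑c) c) = u ↑c}
          ≃ {y : (Fin d → ZMod L) → A // ∀ c : (↥s), y ((fun c : (↥s) => π ↑c) c) = u ↑c} :=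
        (Equiv.ofBijective G hGbij).subtypeEquiv (fun z => Iff.rfl)
      rw [Nat.card_congr (e1.trans e2), card_fixed_on_range _ hιs, Fintype.card_coe, hq]
    have n3 : Nat.card {z : (Fin d → ZMod L) → A // resT z ∈ P}
        = P.card * q ^ (Fintype.card (Fin d → ZMod L) - W.card) := by
      rw [Nat.card_eq_fintype_card, Fintype.card_subtype]
      rw [Finset.card_eq_sum_card_fiberwise
        (s := Finset.univ.filter (fun z => resT z ∈ P)) (f := resT) (t := P) (fun z hz => (Finset.mem_filter.1 hz).2)]
      have hsum : ∀ w ∈ P,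
          ((Finset.univ.filter (fun z => resT z ∈ P)).filter (fun z => resT z = w)).card
            = q ^ (Fintype.card (Fin d → ZMod L) - W.card) := by
        intro w hw
        have heq : (Finset.univ.filter (fun z => resT z ∈ P)).filter (fun z => resT z = w)
            = Finset.univ.filter (fun z => resT z = w) := by
          ext z
          simp only [Finset.mem_filter, Finset.mem_univ, true_and]
          exact ⟨fun h => h.2, fun h => ⟨h ▸ hw, h⟩⟩
        rw [heq, ← Fintype.card_subtype, ← Nat.card_eq_fintype_card]
        exact fib w hw
      rw [Finset.sum_congr rfl hsum, Finset.sum_const, smul_eq_mul]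
    refine ⟨Fintype.card (Fin d → ZMod L), ?_, ?_, ?_⟩
    · calc s.card = Fintype.card (↥s) := (Fintype.card_coe s).symm
        _ ≤ _ := Fintype.card_le_of_injective _ hιs
    · calc W.card = Fintype.card (↥W) := (Fintype.card_coe W).symm
        _ ≤ _ := Fintype.card_le_of_injective _ hιW
    · rw [← n2, n3]
  obtain ⟨nT, hsn, hWn, hPcard⟩ := hcount
  -- final arithmetic
  have hq0 : (q : ENNReal) ≠ 0 := by
    simp [hq, Fintype.card_ne_zero]
  have hqtop : (q : ENNReal) ≠ ⊤ := ENNReal.natCast_ne_top q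
  have harith : ∀ a ≤ nT, ((q : ENNReal))⁻¹ ^ a
      = (q : ENNReal) ^ (nT - a) * ((q : ENNReal))⁻¹ ^ nT := by
    intro a ha
    have h1 : nT = (nT - a) + a := by omega
    calc ((q : ENNReal))⁻¹ ^ a
        = ((q : ENNReal) ^ (nT - a) * ((q : ENNReal))⁻¹ ^ (nT - a)) * ((q : ENNReal))⁻¹ ^ a := by
          rw [← mul_pow, ENNReal.mul_inv_cancel hq0 hqtop, one_pow, one_mul]
      _ = (q : ENNReal) ^ (nT - a) * ((q : ENNReal))⁻¹ ^ nT := by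
          rw [mul_assoc, ← pow_add, ← h1]
  rw [hmeasP, harith W.card hWn, harith s.card hsn, ← mul_assoc]
  congr 1
  calc (P.card : ENNReal) * (q : ENNReal) ^ (nT - W.card)
      = ((P.card * q ^ (nT - W.card) : ℕ) : ENNReal) := by push_cast; ring
    _ = ((q ^ (nT - s.card) : ℕ) : ENNReal) := by rw [hPcard]
    _ = (q : ENNReal) ^ (nT - s.card) := by push_cast; ring

lemma measurable_of_loc {d : ℕ} {A : Type*} [Fintype A] [Nonempty A]
    [MeasurableSpace A] [MeasurableSingletonClass A]
    (F : ((Fin d → ℤ) → A) → ((Fin d → ℤ) → A)) {M : ℕ}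
    (hloc : ∀ (x y : (Fin d → ℤ) → A) (j : Fin d → ℤ),
      (∀ k : Fin d → ℤ, (∀ s, (k s).natAbs ≤ M) → x (k + j) = y (k + j)) → F x j = F y j) :
    Measurable F := by
  classical
  rw [measurable_pi_iff]
  intro j
  set h' : ((↥(ballF d M)) → A) → A := fun w =>
    F (fun k => if h : k - j ∈ ballF d M then w ⟨k - j, h⟩ else Classical.arbitrary A) j with hh'
  have hkey : ∀ x : (Fin d → ℤ) → A, F x j = h' (fun c => x ((c : Fin d → ℤ) + j)) := by
    intro x
    refine hloc _ _ j fun k hk => ?_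
    have hmem : (k + j) - j ∈ ballF d M := by
      rw [add_sub_cancel_right]
      exact mem_ballF.2 hk
    simp only [hh', dif_pos hmem]
    congr 1
    rw [add_sub_cancel_right]
  have : (fun x : (Fin d → ℤ) → A => F x j)
      = h' ∘ (fun x (c : ↥(ballF d M)) => x ((c : Fin d → ℤ) + j)) := by
    funext x; exact hkey x
  rw [this]
  exact (measurable_of_countable h').comp
    (measurable_pi_lambda _ fun c => measurable_pi_apply _)

lemma map_eq_of_balance {d : ℕ} {A : Type*} [Fintype A] [Nonempty A]
    [MeasurableSpace A] [MeasurableSingletonClass A]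
    (F : ((Fin d → ℤ) → A) → ((Fin d → ℤ) → A))
    (hmeas : Measurable F)
    (μ : Measure ((Fin d → ℤ) → A)) (hprob : IsProbabilityMeasure μ)
    (hμ : ∀ (s : Finset (Fin d → ℤ)) (u : (Fin d → ℤ) → A),
      μ {x | ∀ j ∈ s, x j = u j} = (Fintype.card A : ENNReal)⁻¹ ^ s.card)
    (hbal : ∀ (s : Finset (Fin d → ℤ)) (u : (Fin d → ℤ) → A),
      μ {x | ∀ j ∈ s, F x j = u j} = (Fintype.card A : ENNReal)⁻¹ ^ s.card) :
    Measure.map F μ = μ := by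
  classical
  haveI : IsProbabilityMeasure (Measure.map F μ) :=
    Measure.isProbabilityMeasure_map hmeas.aemeasurable
  refine ext_of_generate_finite (measurableCylinders (fun _ : Fin d → ℤ => A))
    generateFrom_measurableCylinders.symm isPiSystem_measurableCylinders (fun S hS => ?_)
    (by simp)
  obtain ⟨s, T, hT, rfl⟩ := (mem_measurableCylinders S).1 hS
  -- decompose T into singletons
  set cylW : (↥s → A) → Set ((Fin d → ℤ) → A) :=
    fun w => cylinder s ({w} : Set (↥s → A)) with hcylWdef
  have hdec : ∀ ν : Measure ((Fin d → ℤ) → A),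
      (∀ w : (↥s → A), MeasurableSet (cylW w)) →
      ν (cylinder s T) = ∑ w ∈ T.toFinset, ν (cylW w) := by
    intro ν hmw
    have hT' : cylinder s T = ⋃ w ∈ T.toFinset, cylW w := by
      ext x
      simp only [hcylWdef, mem_cylinder, Set.mem_iUnion, Set.mem_toFinset,
        Set.mem_singleton_iff]
      constructor
      · intro hx; exact ⟨_, hx, rfl⟩
      · rintro ⟨w, hw, rfl⟩; exact hw
    rw [hT', measure_biUnion_finset ?_ (fun w _ => hmw w)]
    intro w _ w' _ hne
    refine Set.disjoint_left.2 fun x hx hx' => hne ?_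
    have h1 : s.restrict x = w := hx
    have h2 : s.restrict x = w' := hx'
    rw [← h1, h2]
  have hmw : ∀ w : (↥s → A), MeasurableSet (cylW w) :=
    fun w => (measurableSet_singleton w).cylinder
  rw [hdec (Measure.map F μ) hmw, hdec μ hmw]
  refine Finset.sum_congr rfl fun w _ => ?_
  set uw : (Fin d → ℤ) → A :=
    fun j => if h : j ∈ s then w ⟨j, h⟩ else Classical.arbitrary A with huw
  have hcylw : cylW w = {x | ∀ j ∈ s, x j = uw j} := by
    ext x
    simp only [hcylWdef, mem_cylinder, Set.mem_singleton_iff, funext_iff, Set.mem_setOf_eq,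
      Finset.restrict_def]
    constructor
    · intro h j hj
      rw [huw]
      simp only [dif_pos hj]
      exact h ⟨j, hj⟩
    · intro h c
      rw [h (c : Fin d → ℤ) c.2, huw]
      simp only [dif_pos c.2]
  rw [Measure.map_apply hmeas (hmw w), hcylw]
  have hpre : F ⁻¹' {x | ∀ j ∈ s, x j = uw j} = {x | ∀ j ∈ s, F x j = uw j} := rfl
  rw [hpre, hbal s uw, hμ s uw]

end Aux

/-- A surjective equicontinuous cellular automaton has only
rational measurable eigenvalues. -/
theorem equicontinuous_no_measurable_irrational_eigenvalue
    {d : ℕ} (hd : 1 ≤ d) {A : Type*} [Fintype A] [Nonempty A]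
    [TopologicalSpace A] [DiscreteTopology A]
    [MeasurableSpace A] [MeasurableSingletonClass A]
    (F : ((Fin d → ℤ) → A) → ((Fin d → ℤ) → A))
    (hFcont : Continuous F)
    (hFshift : ∀ (v : Fin d → ℤ) (x : (Fin d → ℤ) → A),
      F (fun j => x (j + v)) = fun j => F x (j + v))
    (hFsurj : Function.Surjective F)
    -- every point is an equicontinuity point of `F`
    (hFequi : ∀ x : (Fin d → ℤ) → A, ∀ n : ℕ, ∃ m : ℕ,
      ∀ y : (Fin d → ℤ) → A,
        (∀ j : Fin d → ℤ, (∀ s, (j s).natAbs ≤ m) → y j = x j) →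
        ∀ (i : ℕ) (j : Fin d → ℤ), (∀ s, (j s).natAbs ≤ n) →
          F^[i] y j = F^[i] x j)
    -- `μ` is the uniform Bernoulli measure
    (μ : Measure ((Fin d → ℤ) → A)) (hprob : IsProbabilityMeasure μ)
    (hμ : ∀ (s : Finset (Fin d → ℤ)) (u : (Fin d → ℤ) → A),
      μ {x | ∀ j ∈ s, x j = u j} = (Fintype.card A : ENNReal)⁻¹ ^ s.card)
    (α : ℝ) (g : ((Fin d → ℤ) → A) → ℂ) (hg : Measurable g)
    (hgne : 0 < μ {x | g x ≠ 0})
    (heig : ∀ᵐ x ∂μ, g (F x) = Complex.exp (2 * Real.pi * Complex.I * α) * g x) :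
    ¬ Irrational α := by
  classical
  intro hirr
  obtain ⟨M, hM⟩ := uniformEqui F hFequi
  have hloc : ∀ (x y : (Fin d → ℤ) → A) (j : Fin d → ℤ),
      (∀ k : Fin d → ℤ, (∀ s, (k s).natAbs ≤ M) → x (k + j) = y (k + j)) → F x j = F y j := by
    intro x y j h
    have := locIter F hFshift hM 1 x y j h
    simpa using this
  obtain ⟨p, hp1, hFp⟩ := exists_period F hFshift hM hFsurj
  have hFinj : Function.Injective F := by
    intro x y hxy
    have hp' : p - 1 + 1 = p := by omega
    calc x = F^[p] x := (congrFun hFp x).symm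
      _ = F^[p-1] (F x) := by rw [← hp', Function.iterate_succ_apply, Nat.add_sub_cancel]
      _ = F^[p-1] (F y) := by rw [hxy]
      _ = F^[p] y := by rw [← hp', Function.iterate_succ_apply, Nat.add_sub_cancel]
      _ = y := congrFun hFp y
  have hFmeas : Measurable F := measurable_of_loc F hloc
  have hbal := balance F hFshift hFinj hloc μ hμ
  have hmap : Measure.map F μ = μ := map_eq_of_balance F hFmeas μ hprob hμ hbal
  have hmp : MeasurePreserving F μ μ := ⟨hFmeas, hmap⟩
  set c : ℂ := Complex.exp (2 * Real.pi * Complex.I * α) with hc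
  set E : Set ((Fin d → ℤ) → A) := {x | g (F x) = c * g x} with hE
  have hEmeas : MeasurableSet E :=
    measurableSet_eq_fun (hg.comp hFmeas) (measurable_const.mul hg)
  have hEc : μ Eᶜ = 0 := by
    have := ae_iff.1 heig
    simpa [hE, Set.compl_setOf] using this
  have hpre : ∀ k : ℕ, μ ((F^[k]) ⁻¹' Eᶜ) = 0 := by
    intro k
    rw [(hmp.iterate k).measure_preimage hEmeas.compl.nullMeasurableSet]
    exact hEc
  have hbad : μ (⋃ k ∈ Finset.range p, (F^[k]) ⁻¹' Eᶜ) = 0 := by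
    refine le_antisymm (le_trans (measure_biUnion_finset_le _ _)
      (le_of_eq (Finset.sum_eq_zero fun k _ => hpre k))) zero_le
  have hexists : ∃ x, g x ≠ 0 ∧ ∀ k < p, F^[k] x ∈ E := by
    by_contra h
    push_neg at h
    have hsub : {x | g x ≠ 0} ⊆ ⋃ k ∈ Finset.range p, (F^[k]) ⁻¹' Eᶜ := by
      intro x hx
      obtain ⟨k, hk, hkE⟩ := h x hx
      exact Set.mem_biUnion (Finset.mem_range.2 hk) hkE
    have hle := measure_mono (μ := μ) hsub
    rw [hbad] at hle
    exact hgne.ne' (le_antisymm hle zero_le)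
  obtain ⟨x, hgx, hxE⟩ := hexists
  have hiter : ∀ k, k ≤ p → g (F^[k] x) = c ^ k * g x := by
    intro k
    induction k with
    | zero => simp
    | succ n ih =>
      intro hk
      have hn : n < p := by omega
      have h1 : g (F (F^[n] x)) = c * g (F^[n] x) := hxE n hn
      rw [Function.iterate_succ_apply', h1, ih (by omega)]
      ring
  have hgp : g x = c ^ p * g x := by
    have := hiter p le_rfl
    rw [hFp] at this
    simpa using this
  have hcp : c ^ p = 1 := by
    have h2 : (c ^ p - 1) * g x = 0 := by
      rw [sub_mul, one_mul, ← hgp]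
      ring
    rcases mul_eq_zero.1 h2 with h3 | h3
    · exact sub_eq_zero.1 h3
    · exact absurd h3 hgx
  have hexp : Complex.exp ((p : ℂ) * (2 * Real.pi * Complex.I * α)) = 1 := by
    rw [Complex.exp_nat_mul]
    exact hcp
  obtain ⟨n, hn⟩ := Complex.exp_eq_one_iff.1 hexp
  have hπI : (2 * (Real.pi : ℂ) * Complex.I) ≠ 0 := by
    simp [Real.pi_ne_zero, Complex.I_ne_zero, Complex.ofReal_ne_zero]
  have hpα : (2 * (Real.pi : ℂ) * Complex.I) * ((p : ℂ) * α)
      = (2 * (Real.pi : ℂ) * Complex.I) * n := by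
    linear_combination hn
  have hpα' : (p : ℂ) * α = n := mul_left_cancel₀ hπI hpα
  have hα : (p : ℝ) * α = (n : ℝ) := by exact_mod_cast hpα'
  have hp0 : (p : ℝ) ≠ 0 := Nat.cast_ne_zero.2 (by omega)
  refine hirr ⟨(n : ℚ) / (p : ℚ), ?_⟩
  push_cast
  rw [div_eq_iff hp0]
  linarith [hα]
end

section
/- Let F be a cellular automaton on X = A^{ℤ^d} with radius r, and let w : B_k → A (k ≥ r) be a fully blocking pattern for F. Then the trace sequence i ↦ (F^i(x) restricted to {j : 0 ≤ j_s < r for all s}) is independent of the choice of x ∈ X with x|_{B_k} = w, and this common sequence is eventually periodic: there exist m ∈ ℕ and p ≥ 1 such that for every x with x|_{B_k} = w, every i ∈ ℕ, and every j with 0 ≤ j_s < r for all s, F^{m+ip}(x)(j) = F^m(x)(j). -/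
/-- The trace of a fully blocking pattern is independent of the
configuration extending it, and its common trace sequence is eventually
periodic. -/
theorem fully_blocking_trace_eventually_periodic
    {d : ℕ} (hd : 1 ≤ d) {A : Type*} [Fintype A] [Nonempty A]
    [TopologicalSpace A] [DiscreteTopology A]
    (F : ((Fin d → ℤ) → A) → ((Fin d → ℤ) → A))
    (hFcont : Continuous F)
    (hFshift : ∀ (v : Fin d → ℤ) (x : (Fin d → ℤ) → A),
      F (fun j => x (j + v)) = fun j => F x (j + v))
    (r : ℕ) (hr : 1 ≤ r)
    (hrad : ∀ (x y : (Fin d → ℤ) → A) (m : Fin d → ℤ),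
      (∀ u : Fin d → ℤ, (∀ s, (u s).natAbs ≤ r) → x (m + u) = y (m + u)) →
      F x m = F y m)
    (k : ℕ) (hk : r ≤ k) (w : (Fin d → ℤ) → A)
    (hblock : ∀ x y : (Fin d → ℤ) → A,
      (∀ j : Fin d → ℤ, (∀ s, 0 ≤ j s ∧ j s < (k : ℤ)) → x j = w j) →
      (∀ j : Fin d → ℤ, (∀ s, 0 ≤ j s ∧ j s < (k : ℤ)) → y j = w j) →
      ∀ (i : ℕ) (j : Fin d → ℤ), (∀ s, 0 ≤ j s ∧ j s < (r : ℤ)) →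
        F^[i] x j = F^[i] y j) :
    (∀ x y : (Fin d → ℤ) → A,
      (∀ j : Fin d → ℤ, (∀ s, 0 ≤ j s ∧ j s < (k : ℤ)) → x j = w j) →
      (∀ j : Fin d → ℤ, (∀ s, 0 ≤ j s ∧ j s < (k : ℤ)) → y j = w j) →
      ∀ (i : ℕ) (j : Fin d → ℤ), (∀ s, 0 ≤ j s ∧ j s < (r : ℤ)) →
        F^[i] x j = F^[i] y j) ∧
    ∃ (m p : ℕ), 1 ≤ p ∧
      ∀ x : (Fin d → ℤ) → A,
        (∀ j : Fin d → ℤ, (∀ s, 0 ≤ j s ∧ j s < (k : ℤ)) → x j = w j) →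
        ∀ (i : ℕ) (j : Fin d → ℤ), (∀ s, 0 ≤ j s ∧ j s < (r : ℤ)) →
          F^[m + i * p] x j = F^[m] x j := by

  refine ⟨hblock, ?_⟩
  have hk1 : 1 ≤ k := le_trans hr hk
  have hkz : (0:ℤ) < k := by exact_mod_cast hk1
  have hkne : (k:ℤ) ≠ 0 := ne_of_gt hkz
  -- the k-periodic extension of w
  set x₀ : (Fin d → ℤ) → A := fun j => w (fun s => j s % k) with hx₀
  have hx₀w : ∀ j : Fin d → ℤ, (∀ s, 0 ≤ j s ∧ j s < (k:ℤ)) → x₀ j = w j := by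
    intro j hj
    simp only [hx₀]
    congr 1
    funext s
    exact Int.emod_eq_of_lt (hj s).1 (hj s).2
  -- all iterates of x₀ are k-periodic
  have key : ∀ (i : ℕ) (v : Fin d → ℤ), (∀ s, (k:ℤ) ∣ v s) →
      ∀ j, F^[i] x₀ (j + v) = F^[i] x₀ j := by
    intro i
    induction i with
    | zero =>
      intro v hv j
      simp only [Function.iterate_zero, id_eq, hx₀]
      congr 1
      funext s
      obtain ⟨c, hc⟩ := hv s
      simp [Pi.add_apply, hc, Int.add_mul_emod_self_left]
    | succ n ih =>
      intro v hv j
      have hx : (fun j => F^[n] x₀ (j + v)) = F^[n] x₀ := funext (ih v hv)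
      have h2 := hFshift v (F^[n] x₀)
      rw [hx] at h2
      have h3 := congrFun h2 j
      simp only [Function.iterate_succ_apply']
      exact h3.symm
  -- iterates are determined by their values on the box B_k
  have hdet : ∀ (i : ℕ) (j : Fin d → ℤ),
      F^[i] x₀ j = F^[i] x₀ (fun s => j s % k) := by
    intro i j
    have hv : ∀ s, (k:ℤ) ∣ (j s - j s % k) := by
      intro s
      have : j s - j s % k = (k:ℤ) * (j s / k) := by
        rw [Int.emod_def]; ring
      exact this ▸ Dvd.intro _ rfl
    have := key i (fun s => j s - j s % k) hv (fun s => j s % k)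
    have hsum : (fun s => j s % k) + (fun s => j s - j s % k) = j := by
      funext s; simp [Pi.add_apply]
    rw [hsum] at this
    exact this
  -- pigeonhole on periodic configurations
  obtain ⟨a, b, hab, hg⟩ := Finite.exists_ne_map_eq_of_infinite
      (fun i : ℕ => (fun t : Fin d → Fin k => F^[i] x₀ (fun s => (t s : ℤ))))
  obtain ⟨m, n, hmn, hgeq⟩ : ∃ m n, m < n ∧ ∀ t : Fin d → Fin k,
      F^[m] x₀ (fun s => (t s : ℤ)) = F^[n] x₀ (fun s => (t s : ℤ)) := by
    rcases lt_or_gt_of_ne hab with h | h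
    · exact ⟨a, b, h, fun t => congrFun hg t⟩
    · exact ⟨b, a, h, fun t => (congrFun hg t).symm⟩
  have hconf : F^[m] x₀ = F^[n] x₀ := by
    funext j
    rw [hdet m j, hdet n j]
    have hb : ∀ s, (j s % k).toNat < k := by
      intro s
      have h0 := Int.emod_nonneg (j s) hkne
      have h1 := Int.emod_lt_of_pos (j s) hkz
      omega
    have ht : (fun s => ((⟨(j s % k).toNat, hb s⟩ : Fin k) : ℤ)) =
        (fun s => j s % k) := by
      funext s
      have h0 := Int.emod_nonneg (j s) hkne
      simp [Int.toNat_of_nonneg h0]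
    have := hgeq (fun s => ⟨(j s % k).toNat, hb s⟩)
    rwa [ht] at this
  set p : ℕ := n - m with hp
  have hp1 : 1 ≤ p := by omega
  have hper : ∀ i : ℕ, F^[m + i * p] x₀ = F^[m] x₀ := by
    intro i
    induction i with
    | zero => simp
    | succ i ih =>
      have hidx : m + (i + 1) * p = p + (m + i * p) := by ring
      rw [hidx, Function.iterate_add_apply, ih, ← Function.iterate_add_apply]
      have : p + m = n := by omega
      rw [this, ← hconf]
  refine ⟨m, p, hp1, ?_⟩
  intro x hx i j hj
  calc F^[m + i * p] x j = F^[m + i * p] x₀ j := hblock x x₀ hx hx₀w _ j hj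
    _ = F^[m] x₀ j := by rw [hper i]
    _ = F^[m] x j := hblock x₀ x hx₀w hx m j hj
end

section
/- Let F be a cellular automaton on X = A^{ℤ^d}. Every equicontinuity point of F has an eventually periodic trace in every finite window: if x is an equicontinuity point of F, then for every n ∈ ℕ there exist m ∈ ℕ and p ≥ 1 such that F^{m+ip}(x)(j) = F^m(x)(j) for all i ∈ ℕ and all j with ‖j‖_∞ ≤ n. Equivalently, the set of equicontinuity points of F is contained in ⋂_{n ∈ ℕ} Q_n. -/
/-- Every equicontinuity point of a cellular automaton has an
eventually periodic trace in every finite window: the set of equicontinuity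
points is contained in `⋂ n, Q n`. -/
theorem equicontinuity_point_trace_eventually_periodic
    {d : ℕ} (hd : 1 ≤ d) {A : Type*} [Fintype A] [Nonempty A]
    [TopologicalSpace A] [DiscreteTopology A]
    (F : ((Fin d → ℤ) → A) → ((Fin d → ℤ) → A))
    (hFcont : Continuous F)
    (hFshift : ∀ (v : Fin d → ℤ) (x : (Fin d → ℤ) → A),
      F (fun j => x (j + v)) = fun j => F x (j + v))
    (x : (Fin d → ℤ) → A)
    (hx : ∀ n : ℕ, ∃ m : ℕ, ∀ y : (Fin d → ℤ) → A,
      (∀ j : Fin d → ℤ, (∀ s, (j s).natAbs ≤ m) → y j = x j) →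
      ∀ (i : ℕ) (j : Fin d → ℤ), (∀ s, (j s).natAbs ≤ n) → F^[i] y j = F^[i] x j) :
    ∀ n : ℕ, ∃ (m p : ℕ), 1 ≤ p ∧
      ∀ (i : ℕ) (j : Fin d → ℤ), (∀ s, (j s).natAbs ≤ n) →
        F^[m + i * p] x j = F^[m] x j := by
  intro n
  obtain ⟨m, hm⟩ := hx n
  set N : ℤ := 2 * (m : ℤ) + 1 with hNdef
  have hN : 0 < N := by omega
  -- representative map into [-m, m]
  set r : ℤ → ℤ := fun a => (a + m) % N - m with hrdef
  have hr_range : ∀ a : ℤ, -(m : ℤ) ≤ r a ∧ r a ≤ m := by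
    intro a
    have h1 : 0 ≤ (a + m) % N := Int.emod_nonneg _ (by omega)
    have h2 : (a + m) % N < N := Int.emod_lt_of_pos _ hN
    simp only [hrdef]; omega
  have hr_natAbs : ∀ a : ℤ, (r a).natAbs ≤ m := by
    intro a; have := hr_range a; omega
  have hr_fix : ∀ a : ℤ, a.natAbs ≤ m → r a = a := by
    intro a ha
    have h1 : (a + m) % N = a + m := Int.emod_eq_of_lt (by omega) (by omega)
    simp only [hrdef]; omega
  have hr_period : ∀ a k : ℤ, r (a + N * k) = r a := by
    intro a k
    have : a + N * k + m = a + m + N * k := by ring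
    simp only [hrdef, this, Int.add_mul_emod_self_left]
  have hr_sub : ∀ a : ℤ, a = r a + N * ((a + m) / N) := by
    intro a
    have := Int.mul_ediv_add_emod (a + m) N
    simp only [hrdef]; omega
  set ρ : (Fin d → ℤ) → (Fin d → ℤ) := fun j s => r (j s) with hρdef
  set y : (Fin d → ℤ) → A := fun j => x (ρ j) with hydef
  -- periodicity property
  set P : ((Fin d → ℤ) → A) → Prop :=
    fun z => ∀ v : Fin d → ℤ, (fun j => z (j + fun s => N * v s)) = z with hPdef
  have hPy : P y := by
    intro v
    funext j
    simp only [hydef]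
    congr 1
    funext s
    simp only [hρdef, Pi.add_apply]
    exact hr_period (j s) (v s)
  have hPF : ∀ z, P z → P (F z) := by
    intro z hz v
    have h1 := hFshift (fun s => N * v s) z
    rw [hz v] at h1
    exact h1.symm
  have hPiter : ∀ i, P (F^[i] y) := by
    intro i
    induction i with
    | zero => simpa using hPy
    | succ i ih =>
      rw [Function.iterate_succ_apply']
      exact hPF _ ih
  have hQ : ∀ z, P z → ∀ j, z j = z (ρ j) := by
    intro z hz j
    have hjeq : j = (ρ j) + fun s => N * ((j s + m) / N) := by
      funext s
      simp only [Pi.add_apply, hρdef]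
      exact hr_sub (j s)
    calc z j = z ((ρ j) + fun s => N * ((j s + m) / N)) := by rw [← hjeq]
      _ = z (ρ j) := congrFun (hz (fun s => (j s + m) / N)) (ρ j)
  -- pigeonhole on the finite set of periodic configurations
  set φ : ℕ → ((Fin d → Fin (2 * m + 1)) → A) :=
    fun i k => F^[i] y (fun s => (k s : ℤ) - m) with hφdef
  obtain ⟨a, b, hab_ne, hφab⟩ := Finite.exists_ne_map_eq_of_infinite φ
  have key : ∀ a b : ℕ, φ a = φ b → F^[a] y = F^[b] y := by
    intro a b hφab
    funext j
    have hk : ∀ s, (r (j s) + m).toNat < 2 * m + 1 := by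
      intro s; have := hr_range (j s); omega
    set k : Fin d → Fin (2 * m + 1) := fun s => ⟨(r (j s) + m).toNat, hk s⟩ with hkdef
    have hρk : ρ j = fun s => ((k s : ℤ) - m) := by
      funext s
      simp only [hρdef, hkdef]
      have := hr_range (j s)
      omega
    calc F^[a] y j = F^[a] y (ρ j) := hQ _ (hPiter a) j
      _ = φ a k := by rw [hρk]
      _ = φ b k := by rw [hφab]
      _ = F^[b] y (ρ j) := by rw [hρk]
      _ = F^[b] y j := (hQ _ (hPiter b) j).symm
  have hyx : ∀ j : Fin d → ℤ, (∀ s, (j s).natAbs ≤ m) → y j = x j := by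
    intro j hj
    simp only [hydef]
    congr 1
    funext s
    exact hr_fix (j s) (hj s)
  have hyx' := hm y hyx
  -- wlog a < b
  rcases lt_or_gt_of_ne hab_ne with hlt | hlt
  case _ =>
    have hab := key a b hφab
    refine ⟨a, b - a, by omega, ?_⟩
    have hper : ∀ i, F^[a + i * (b - a)] y = F^[a] y := by
      intro i
      induction i with
      | zero => simp
      | succ i ih =>
        have h1 : a + (i + 1) * (b - a) = (b - a) + (a + i * (b - a)) := by ring
        rw [h1, Function.iterate_add_apply, ih, ← Function.iterate_add_apply]
        have h2 : b - a + a = b := by omega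
        rw [h2, ← hab]
    intro i j hj
    calc F^[a + i * (b - a)] x j = F^[a + i * (b - a)] y j := (hyx' _ j hj).symm
      _ = F^[a] y j := by rw [hper i]
      _ = F^[a] x j := hyx' a j hj
  case _ =>
    have hab := key b a hφab.symm
    refine ⟨b, a - b, by omega, ?_⟩
    have hper : ∀ i, F^[b + i * (a - b)] y = F^[b] y := by
      intro i
      induction i with
      | zero => simp
      | succ i ih =>
        have h1 : b + (i + 1) * (a - b) = (a - b) + (b + i * (a - b)) := by ring
        rw [h1, Function.iterate_add_apply, ih, ← Function.iterate_add_apply]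
        have h2 : a - b + b = a := by omega
        rw [h2, ← hab]
    intro i j hj
    calc F^[b + i * (a - b)] x j = F^[b + i * (a - b)] y j := (hyx' _ j hj).symm
      _ = F^[b] y j := by rw [hper i]
      _ = F^[b] x j := hyx' b j hj
end
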